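/- arXiv:cs/0603014 — 2 statements merged into one kernel-verified Lean document; each statement's English description precedes it below -/
import Mathlib

section
/- Let ρ, σ be well agreeing near weights on an F-algebra R. Choose f₀ = 1, and for each i ≥ 1 choose f_i ∈ R with ρ(f_i) = i; let H(σ) = σ(U_ρ \ {0}) = {0 = m₀ < m₁ < m₂ < ...} and choose g_j ∈ U_ρ with σ(g_j) = m_j for j ≥ 1. Then B = {f_i : i ∈ ℕ₀} ∪ {g_j : j ≥ 1} is a basis of R as an F-vector space. -/
/-!
Both near weights are non-archimedean degree functions on `R`, so a family whose members have
pairwise distinct degrees is linearly independent, and a nonzero element of its span has the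
degree of one of its members. The `f_i` with `i ≥ 1` have distinct `ρ`-values `i ≥ 1`, while
`1` and the `g_j` lie in `U_ρ = {ρ ≤ 0}` (a subspace) and have distinct `σ`-values `m_j`;
the two spans therefore meet only in `0`. For spanning, (N4) lets us lower the degree of any
element by subtracting a multiple of a family member of the same degree: first inside `U_ρ`
with respect to `σ`, where `U_ρ ∩ U_σ = F`, and then in `R` with respect to `ρ`.
-/

/-- A near order (n-order) function on an `F`-algebra `R`: axioms (N0)–(N4). -/
def IsNearOrder (F : Type*) {R : Type*} [Field F] [CommRing R] [Algebra F R]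
    (ρ : R → WithBot ℕ) : Prop :=
  (∀ f : R, ρ f = ⊥ ↔ f = 0) ∧
  (∀ (c : F) (f : R), c ≠ 0 → ρ (c • f) = ρ f) ∧
  (∀ f g : R, ρ (f + g) ≤ max (ρ f) (ρ g)) ∧
  (∀ f g h : R, ρ f < ρ g → ρ (f * h) ≤ ρ (g * h)) ∧
  (∀ f g h : R, ρ f < ρ g → ρ 1 < ρ h → ρ (f * h) < ρ (g * h)) ∧
  (∀ f g : R, ρ f = ρ g → ρ 1 < ρ f → ρ 1 < ρ g →
    ∃ c : F, c ≠ 0 ∧ ρ (f - c • g) < ρ f)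

/-- A near weight function: a normal near order function satisfying (N5).
Normality: `ρ` takes the value `0` on all nonzero elements of
`U_ρ = {f : ρ(f) ≤ ρ(1)}`, and `gcd ρ(M_ρ) = 1` (every common divisor of the
values of `ρ` on `M_ρ = {f : ρ(f) > ρ(1)}` is `1`, provided `M_ρ ≠ ∅`). -/
def IsNearWeight (F : Type*) {R : Type*} [Field F] [CommRing R] [Algebra F R]
    (ρ : R → WithBot ℕ) : Prop :=
  IsNearOrder F ρ ∧
  (∀ f : R, f ≠ 0 → ρ f ≤ ρ 1 → ρ f = 0) ∧
  ((∃ f : R, ρ 1 < ρ f) →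
    ∀ d : ℕ, (∀ f : R, ρ 1 < ρ f → (d : ℕ) ∣ WithBot.unbotD 0 (ρ f)) → d = 1) ∧
  (∀ f g : R, ρ (f * g) ≤ ρ f + ρ g) ∧
  (∀ f g : R, ρ 1 < ρ f → ρ 1 < ρ g → ρ (f * g) = ρ f + ρ g)

/-- The semigroup `H(ρ,σ) = {(ρ(f), σ(f)) : f ∈ R \ {0}} ⊆ ℕ²`. -/
def Hset {R : Type*} [CommRing R] (ρ σ : R → WithBot ℕ) : Set (ℕ × ℕ) :=
  {p : ℕ × ℕ | ∃ f : R, f ≠ 0 ∧ ρ f = (p.1 : WithBot ℕ) ∧ σ f = (p.2 : WithBot ℕ)}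

/-- Axioms (N0)–(N2) of a near order function, for a function on a vector space. -/
structure IsUltrametricDegree (F : Type*) {M Γ : Type*} [DivisionRing F] [AddCommGroup M]
    [Module F M] [LinearOrder Γ] [OrderBot Γ] (φ : M → Γ) : Prop where
  eq_bot_iff : ∀ x, φ x = ⊥ ↔ x = 0
  smul_eq : ∀ (c : F) x, c ≠ 0 → φ (c • x) = φ x
  add_le : ∀ x y, φ (x + y) ≤ max (φ x) (φ y)

namespace IsUltrametricDegree

variable {F M Γ ι : Type*} [DivisionRing F] [AddCommGroup M] [Module F M]
  [LinearOrder Γ] [OrderBot Γ] {φ : M → Γ}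

theorem apply_zero (hφ : IsUltrametricDegree F φ) : φ 0 = ⊥ :=
  (hφ.eq_bot_iff 0).2 rfl

theorem apply_neg (hφ : IsUltrametricDegree F φ) (x : M) : φ (-x) = φ x := by
  simpa using hφ.smul_eq (-1) x (neg_ne_zero.2 one_ne_zero)

theorem apply_add_eq_of_lt (hφ : IsUltrametricDegree F φ) {x y : M} (h : φ y < φ x) :
    φ (x + y) = φ x := by
  refine le_antisymm ((hφ.add_le x y).trans (max_le le_rfl h.le)) (not_lt.1 fun hlt => ?_)
  have := hφ.add_le (x + y) (-y)
  rw [add_neg_cancel_right, hφ.apply_neg] at this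
  exact (this.trans_lt (max_lt hlt h)).false

theorem apply_sum_le (hφ : IsUltrametricDegree F φ) (s : Finset ι) (x : ι → M) :
    φ (∑ i ∈ s, x i) ≤ s.sup (φ ∘ x) := by
  classical
  induction s using Finset.cons_induction with
  | empty => simp [hφ.apply_zero]
  | cons a s ha ih =>
    rw [Finset.sum_cons, Finset.sup_cons]
    exact (hφ.add_le _ _).trans (max_le_max le_rfl ih)

def closedBall (hφ : IsUltrametricDegree F φ) (b : Γ) : Submodule F M where
  carrier := {x | φ x ≤ b}
  zero_mem' := by simp [hφ.apply_zero]
  add_mem' {x y} hx hy := (hφ.add_le x y).trans (max_le hx hy)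
  smul_mem' c x hx := by
    by_cases hc : c = 0
    · simp [hc, hφ.apply_zero]
    · exact (hφ.smul_eq c x hc).trans_le hx

theorem exists_apply_linearCombination_eq (hφ : IsUltrametricDegree F φ) {v : ι → M}
    (hv : ∀ i, v i ≠ 0) (hinj : Function.Injective (φ ∘ v)) {c : ι →₀ F} (hc : c ≠ 0) :
    ∃ i, φ (Finsupp.linearCombination F v c) = φ (v i) := by
  classical
  obtain ⟨i, hi, hmax⟩ :=
    c.support.exists_max_image (φ ∘ v) (Finsupp.support_nonempty_iff.2 hc)
  refine ⟨i, ?_⟩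
  have hci : c i ≠ 0 := Finsupp.mem_support_iff.1 hi
  have hrest : φ (∑ j ∈ c.support.erase i, c j • v j) < φ (c i • v i) := by
    rw [hφ.smul_eq _ _ hci]
    refine (hφ.apply_sum_le _ _).trans_lt ((Finset.sup_lt_iff ?_).2 fun j hj => ?_)
    · exact bot_lt_iff_ne_bot.2 fun h => hv i ((hφ.eq_bot_iff _).1 h)
    · obtain ⟨hji, hj⟩ := Finset.mem_erase.1 hj
      rw [Function.comp_apply, hφ.smul_eq _ _ (Finsupp.mem_support_iff.1 hj)]
      exact lt_of_le_of_ne (hmax j hj) fun h => hji (hinj h)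
  rw [Finsupp.linearCombination_apply, Finsupp.sum, ← Finset.add_sum_erase _ _ hi,
    hφ.apply_add_eq_of_lt hrest, hφ.smul_eq _ _ hci]

theorem linearIndependent (hφ : IsUltrametricDegree F φ) {v : ι → M} (hv : ∀ i, v i ≠ 0)
    (hinj : Function.Injective (φ ∘ v)) : LinearIndependent F v := by
  refine linearIndependent_iff.2 fun c hc => by_contra fun hc0 => ?_
  obtain ⟨i, hi⟩ := hφ.exists_apply_linearCombination_eq hv hinj hc0
  rw [hc, hφ.apply_zero, eq_comm, hφ.eq_bot_iff] at hi
  exact hv i hi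

theorem lt_apply_of_mem_span (hφ : IsUltrametricDegree F φ) {v : ι → M} (hv : ∀ i, v i ≠ 0)
    (hinj : Function.Injective (φ ∘ v)) {b : Γ} (hb : ∀ i, b < φ (v i)) {x : M}
    (hx : x ∈ Submodule.span F (Set.range v)) (hx0 : x ≠ 0) : b < φ x := by
  obtain ⟨c, rfl⟩ := Finsupp.mem_span_range_iff_exists_finsupp.1 hx
  have hc : c ≠ 0 := by rintro rfl; simp at hx0
  obtain ⟨i, hi⟩ := hφ.exists_apply_linearCombination_eq hv hinj hc
  rw [← Finsupp.linearCombination_apply, hi]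
  exact hb i

theorem linearIndependent_of_injOn (hφ : IsUltrametricDegree F φ) {ψ : M → Γ}
    (hψ : IsUltrametricDegree F ψ) {v : ι → M} (hv : ∀ i, v i ≠ 0) (b : Γ)
    (hhigh : Set.InjOn (φ ∘ v) {i | b < φ (v i)}) (hlow : Set.InjOn (ψ ∘ v) {i | φ (v i) ≤ b}) :
    LinearIndependent F v := by
  classical
  set p : ι → Prop := fun i => b < φ (v i)
  have hlow' : Set.InjOn (ψ ∘ v) {i | ¬ p i} := by simpa [p] using hlow
  rw [← linearIndependent_equiv (Equiv.sumCompl p)]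
  have hsplit : v ∘ Equiv.sumCompl p =
      Sum.elim (fun i : {i // p i} => v i) (fun i : {i // ¬ p i} => v i) := by
    ext (i | i) <;> rfl
  rw [hsplit]
  refine .sum_type (hφ.linearIndependent (fun i => hv i) hhigh.injective)
    (hψ.linearIndependent (fun i => hv i) hlow'.injective)
    (Submodule.disjoint_def.2 fun x hhighx hlowx => by_contra fun hx0 => ?_)
  have hlt : b < φ x := hφ.lt_apply_of_mem_span (v := fun i : {i // p i} => v i)
    (fun i => hv i) hhigh.injective (fun i => i.2) hhighx hx0
  have hle : x ∈ hφ.closedBall b :=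
    Submodule.span_le.2 (Set.range_subset_iff.2 fun i => not_lt.1 i.2) hlowx
  exact (hle.trans_lt hlt).false

end IsUltrametricDegree

theorem Submodule.le_of_forall_exists_sub_lt {R M Γ : Type*} [Ring R] [AddCommGroup M]
    [Module R M] [Preorder Γ] [WellFoundedLT Γ] (φ : M → Γ) {S T : Submodule R M}
    (h : ∀ x ∈ T, x ∉ S → ∃ y ∈ S, y ∈ T ∧ φ (x - y) < φ x) : T ≤ S := by
  intro x hxT
  induction x using (InvImage.wf φ wellFounded_lt).induction with
  | _ x ih =>
    by_contra hxS
    obtain ⟨y, hyS, hyT, hlt⟩ := h x hxT hxS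
    exact hxS (by simpa using S.add_mem (ih (x - y) hlt (T.sub_mem hxT hyT)) hyS)

section NearOrder

variable {F R : Type*} [Field F] [CommRing R] [Algebra F R] {ρ : R → WithBot ℕ}

theorem IsNearOrder.isUltrametricDegree (hρ : IsNearOrder F ρ) : IsUltrametricDegree F ρ :=
  ⟨hρ.1, hρ.2.1, hρ.2.2.1⟩

theorem IsNearOrder.exists_sub_smul_lt (hρ : IsNearOrder F ρ) {x y : R} (hxy : ρ x = ρ y)
    (hx : ρ 1 < ρ x) : ∃ c : F, c ≠ 0 ∧ ρ (x - c • y) < ρ x :=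
  hρ.2.2.2.2.2 x y hxy hx (hxy ▸ hx)

theorem IsNearOrder.le_of_forall_exists_eq (hρ : IsNearOrder F ρ) {S T : Submodule F R}
    (hsmall : ∀ x ∈ T, ρ x ≤ ρ 1 → x ∈ S)
    (hlarge : ∀ x ∈ T, ρ 1 < ρ x → ∃ y ∈ S, y ∈ T ∧ ρ y = ρ x) : T ≤ S :=
  Submodule.le_of_forall_exists_sub_lt ρ fun x hxT hxS => by
    have hx : ρ 1 < ρ x := lt_of_not_ge fun hle => hxS (hsmall x hxT hle)
    obtain ⟨y, hyS, hyT, hyx⟩ := hlarge x hxT hx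
    obtain ⟨c, -, hc⟩ := hρ.exists_sub_smul_lt hyx.symm hx
    exact ⟨c • y, S.smul_mem c hyS, T.smul_mem c hyT, hc⟩

theorem IsNearWeight.apply_one [Nontrivial R] (hρ : IsNearWeight F ρ) : ρ 1 = 0 :=
  hρ.2.1 1 one_ne_zero le_rfl

end NearOrder

theorem linearIndependent_sumElim_of_ultrametricDegrees {F R : Type*} [DivisionRing F] [Ring R]
    [Module F R] {ρ σ : R → WithBot ℕ} (hρ : IsUltrametricDegree F ρ)
    (hσ : IsUltrametricDegree F σ) (hρ1 : ρ 1 = 0) (hσ1 : σ 1 = 0) {f g : ℕ → R} {m : ℕ → ℕ}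
    (hf0 : f 0 = 1) (hf : ∀ i : ℕ, 1 ≤ i → ρ (f i) = (i : WithBot ℕ)) (hm : StrictMono m)
    (hm0 : m 0 = 0) (hg : ∀ j : ℕ, 1 ≤ j → ρ (g j) ≤ ρ 1 ∧ σ (g j) = (m j : WithBot ℕ)) :
    LinearIndependent F (Sum.elim f (fun j : ℕ => g (j + 1))) := by
  have hρf : ∀ k, ρ (f k) = k := by
    rintro (_ | k)
    · simp [hf0, hρ1]
    · exact hf _ k.succ_pos
  have hρg : ∀ j, ρ (g (j + 1)) ≤ 0 := fun j => hρ1 ▸ (hg _ j.succ_pos).1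
  have hσg : ∀ j, σ (g (j + 1)) = m (j + 1) := fun j => (hg _ j.succ_pos).2
  have hlow : ∀ k, ρ (f k) ≤ 0 → k = 0 := fun k hk => by
    rw [hρf] at hk
    exact Nat.le_zero.1 (by exact_mod_cast hk)
  have hmpos : ∀ j, 0 < m (j + 1) := fun j => hm0 ▸ hm j.succ_pos
  refine hρ.linearIndependent_of_injOn hσ ?_ 0 ?_ ?_
  · rintro (k | j) h <;> simp only [Sum.elim_inl, Sum.elim_inr] at h
    · simpa [h, hρ.apply_zero] using hρf k
    · simpa [h, hσ.apply_zero] using hσg j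
  · rintro (k | j) hk (l | j') hl h
    · simpa [hρf] using h
    · exact ((hρg j').trans_lt hl).false.elim
    · exact ((hρg j).trans_lt hk).false.elim
    · exact ((hρg j).trans_lt hk).false.elim
  · rintro (k | j) hk (l | j') hl h <;>
      simp only [Function.comp_apply, Sum.elim_inl, Sum.elim_inr] at hk hl h
    · rw [hlow k hk, hlow l hl]
    · rw [hlow k hk, hf0, hσ1, hσg] at h
      exact absurd (by exact_mod_cast h.symm) (hmpos j').ne'
    · rw [hlow l hl, hf0, hσ1, hσg] at h
      exact absurd (by exact_mod_cast h) (hmpos j).ne'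
    · rw [hσg, hσg] at h
      have hmj : m (j + 1) = m (j' + 1) := by exact_mod_cast h
      rw [Nat.succ_injective (hm.injective hmj)]

theorem span_range_sumElim_eq_top_of_nearOrders {F R : Type*} [Field F] [CommRing R]
    [Algebra F R] {ρ σ : R → WithBot ℕ} (hρ : IsNearOrder F ρ) (hσ : IsNearOrder F σ)
    (hρ1 : ρ 1 = 0) (hσ1 : σ 1 = 0)
    (hU : {h : R | ρ h ≤ ρ 1} ∩ {h : R | σ h ≤ σ 1} ⊆ Set.range (algebraMap F R))
    {f g : ℕ → R} {m : ℕ → ℕ} (hf0 : f 0 = 1) (hf : ∀ i : ℕ, 1 ≤ i → ρ (f i) = (i : WithBot ℕ))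
    (hm0 : m 0 = 0)
    (hmrange : {n : ℕ | ∃ h : R, h ≠ 0 ∧ ρ h ≤ ρ 1 ∧ σ h = (n : WithBot ℕ)} ⊆ Set.range m)
    (hg : ∀ j : ℕ, 1 ≤ j → ρ (g j) ≤ ρ 1 ∧ σ (g j) = (m j : WithBot ℕ)) :
    Submodule.span F (Set.range (Sum.elim f (fun j : ℕ => g (j + 1)))) = ⊤ := by
  set S := Submodule.span F (Set.range (Sum.elim f (fun j : ℕ => g (j + 1))))
  have hfS : ∀ i, f i ∈ S := fun i => Submodule.subset_span ⟨.inl i, rfl⟩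
  have hgS : ∀ j, 1 ≤ j → g j ∈ S := fun j hj => by
    obtain ⟨j, rfl⟩ := Nat.exists_eq_add_of_le' hj
    exact Submodule.subset_span ⟨.inr j, rfl⟩
  have hUρ : hρ.isUltrametricDegree.closedBall (ρ 1) ≤ S := by
    refine hσ.le_of_forall_exists_eq (fun x hxρ hxσ => ?_) (fun x hxρ hxσ => ?_)
    · obtain ⟨a, rfl⟩ := hU ⟨hxρ, hxσ⟩
      rw [Algebra.algebraMap_eq_smul_one, ← hf0]
      exact S.smul_mem a (hfS 0)
    · obtain ⟨n, hn, hpos⟩ := WithBot.lt_iff_exists_coe.1 (hσ1 ▸ hxσ)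
      have hx0 : x ≠ 0 := by
        rintro rfl
        simp [hσ.isUltrametricDegree.apply_zero] at hn
      obtain ⟨j, rfl⟩ := hmrange ⟨x, hx0, hxρ, hn⟩
      have hj : 1 ≤ j := Nat.one_le_iff_ne_zero.2 (by rintro rfl; simp [hm0] at hpos)
      exact ⟨g j, hgS j hj, (hg j hj).1, by rw [(hg j hj).2, hn]; rfl⟩
  rw [eq_top_iff]
  refine hρ.le_of_forall_exists_eq (fun x _ hx => hUρ hx) (fun x _ hx => ?_)
  obtain ⟨n, hn, hpos⟩ := WithBot.lt_iff_exists_coe.1 (hρ1 ▸ hx)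
  have hn1 : 1 ≤ n := Nat.succ_le_of_lt (WithBot.coe_lt_coe.1 hpos)
  exact ⟨f n, hfS n, trivial, by rw [hf n hn1, hn]; rfl⟩

theorem stmt_13_general {F R : Type*} [Field F] [CommRing R] [Algebra F R]
    (ρ σ : R → WithBot ℕ) (hρ : IsNearWeight F ρ) (hσ : IsNearWeight F σ)
    (hU : {h : R | ρ h ≤ ρ 1} ∩ {h : R | σ h ≤ σ 1} = Set.range (algebraMap F R))
    (f : ℕ → R) (hf0 : f 0 = 1)
    (hf : ∀ i : ℕ, 1 ≤ i → ρ (f i) = (i : WithBot ℕ))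
    (m : ℕ → ℕ) (hm : StrictMono m) (hm0 : m 0 = 0)
    (hmrange : Set.range m = {n : ℕ | ∃ h : R, h ≠ 0 ∧ ρ h ≤ ρ 1 ∧ σ h = (n : WithBot ℕ)})
    (g : ℕ → R) (hg : ∀ j : ℕ, 1 ≤ j → ρ (g j) ≤ ρ 1 ∧ σ (g j) = (m j : WithBot ℕ)) :
    LinearIndependent F (Sum.elim f (fun j : ℕ => g (j + 1))) ∧
    Submodule.span F (Set.range (Sum.elim f (fun j : ℕ => g (j + 1)))) = ⊤ := by
  have hρ' := hρ.1.isUltrametricDegree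
  have : Nontrivial R :=
    nontrivial_of_ne (f 1) 0 fun h => by simpa [h, hρ'.apply_zero] using hf 1 le_rfl
  exact ⟨linearIndependent_sumElim_of_ultrametricDegrees hρ' hσ.1.isUltrametricDegree
      hρ.apply_one hσ.apply_one hf0 hf hm hm0 hg,
    span_range_sumElim_eq_top_of_nearOrders hρ.1 hσ.1 hρ.apply_one hσ.apply_one hU.le hf0 hf
      hm0 hmrange.ge hg⟩

/-- for well agreeing near weights `ρ, σ`, with `f₀ = 1`,
`ρ(f_i) = i` for `i ≥ 1`, and `g_j ∈ U_ρ` with `σ(g_j) = m_j`, where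
`H(σ) = σ(U_ρ \ {0}) = {0 = m₀ < m₁ < ⋯}`, the family
`B = {f_i : i ∈ ℕ} ∪ {g_j : j ≥ 1}` is a basis of `R` over `F`. -/
theorem stmt_13 {F R : Type*} [Field F] [CommRing R] [Algebra F R]
    (ρ σ : R → WithBot ℕ) (hρ : IsNearWeight F ρ) (hσ : IsNearWeight F σ)
    (hfin : {p : ℕ × ℕ | p ∉ Hset ρ σ}.Finite)
    (hU : {h : R | ρ h ≤ ρ 1} ∩ {h : R | σ h ≤ σ 1} = Set.range (algebraMap F R))
    (f : ℕ → R) (hf0 : f 0 = 1)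
    (hf : ∀ i : ℕ, 1 ≤ i → ρ (f i) = (i : WithBot ℕ))
    (m : ℕ → ℕ) (hm : StrictMono m) (hm0 : m 0 = 0)
    (hmrange : Set.range m = {n : ℕ | ∃ h : R, h ≠ 0 ∧ ρ h ≤ ρ 1 ∧ σ h = (n : WithBot ℕ)})
    (g : ℕ → R) (hg : ∀ j : ℕ, 1 ≤ j → ρ (g j) ≤ ρ 1 ∧ σ (g j) = (m j : WithBot ℕ)) :
    LinearIndependent F (Sum.elim f (fun j : ℕ => g (j + 1))) ∧
    Submodule.span F (Set.range (Sum.elim f (fun j : ℕ => g (j + 1)))) = ⊤ :=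
  stmt_13_general ρ σ hρ hσ hU f hf0 hf m hm hm0 hmrange g hg
end

section
/- Let ρ, σ be well agreeing near weights on an F-algebra R and let {f_i} ∪ {g_j} be a good basis, i.e., σ(f_i) = min{σ(f) : f ∈ R, ρ(f) = i} for each i. Then for every i, either σ(f_i) = 0 or σ(f_i) is a gap of the numerical semigroup H(σ) = {m : (0,m) ∈ H(ρ,σ)}. -/
/-!
If `σ(f_i) = t > 0` were a value `σ(g)` with `ρ(g) = 0`, axiom (N4) for `σ` would give `c`
with `σ(f_i - c g) < σ(f_i)`. Since `ρ(c g) = 0 < i`, the ultrametric inequality keeps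
`ρ(f_i - c g) = i`, contradicting the minimality of `σ(f_i)`.
-/

namespace IsNearOrder

variable {F R : Type*} [Field F] [CommRing R] [Algebra F R] {ρ : R → WithBot ℕ}

theorem exists_eq_coe (hρ : IsNearOrder F ρ) {x : R} (hx : x ≠ 0) : ∃ n : ℕ, ρ x = n := by
  obtain ⟨n, hn⟩ := WithBot.ne_bot_iff_exists.1 (mt (hρ.1 x).1 hx)
  exact ⟨n, hn.symm⟩

theorem ne_zero_of_eq_coe (hρ : IsNearOrder F ρ) {x : R} {n : ℕ} (hx : ρ x = n) : x ≠ 0 :=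
  fun h => WithBot.coe_ne_bot (hx.symm.trans ((hρ.1 x).2 h))

theorem map_neg (hρ : IsNearOrder F ρ) (x : R) : ρ (-x) = ρ x := by
  rw [← neg_one_smul F x]
  exact hρ.2.1 (-1) x (neg_ne_zero.2 one_ne_zero)

theorem map_sub_of_lt (hρ : IsNearOrder F ρ) {x y : R} (h : ρ y < ρ x) : ρ (x - y) = ρ x := by
  have hle : ρ (x - y) ≤ ρ x := by
    simpa [sub_eq_add_neg, hρ.map_neg, h.le] using hρ.2.2.1 x (-y)
  have hge : ρ x ≤ ρ (x - y) := by
    have h' := hρ.2.2.1 (x - y) y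
    rw [sub_add_cancel] at h'
    exact (le_max_iff.1 h').resolve_right h.not_ge
  exact le_antisymm hle hge

end IsNearOrder

theorem IsNearWeight.map_one {F R : Type*} [Field F] [CommRing R] [Algebra F R] [Nontrivial R]
    {ρ : R → WithBot ℕ} (hρ : IsNearWeight F ρ) : ρ 1 = 0 :=
  hρ.2.1 1 one_ne_zero le_rfl

theorem notMem_Hset_of_minimal {F R : Type*} [Field F] [CommRing R] [Algebra F R]
    {ρ σ : R → WithBot ℕ} (hρ : IsNearOrder F ρ) (hσ : IsNearOrder F σ) {x : R} {i t : ℕ}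
    (hx : ρ x = i) (hi : 0 < i) (hσx : σ x = t) (ht : σ 1 < t)
    (hmin : ∀ h : R, ρ h = i → σ x ≤ σ h) : (0, t) ∉ Hset ρ σ := by
  rintro ⟨g, -, hρg, hσg⟩
  obtain ⟨c, hc, hlt⟩ := hσ.2.2.2.2.2 x g (hσx.trans hσg.symm) (hσx ▸ ht) (hσg ▸ ht)
  have hρcg : ρ (c • g) < ρ x := by
    rw [hρ.2.1 c g hc, hρg, hx]
    exact_mod_cast hi
  exact (hmin _ ((hρ.map_sub_of_lt hρcg).trans hx)).not_gt hlt

theorem stmt_14_general {F R : Type*} [Field F] [CommRing R] [Algebra F R]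
    (ρ σ : R → WithBot ℕ) (hρ : IsNearWeight F ρ) (hσ : IsNearWeight F σ)
    (f : ℕ → R) (hf0 : f 0 = 1)
    (hf : ∀ i : ℕ, 1 ≤ i → ρ (f i) = (i : WithBot ℕ))
    (hmin : ∀ i : ℕ, 1 ≤ i → ∀ h : R, ρ h = (i : WithBot ℕ) → σ (f i) ≤ σ h) :
    ∀ i : ℕ, ∃ t : ℕ, σ (f i) = (t : WithBot ℕ) ∧
      (t = 0 ∨ (0, t) ∉ Hset ρ σ) := by
  have hf_ne_zero (i : ℕ) (hi : 1 ≤ i) : f i ≠ 0 := hρ.1.ne_zero_of_eq_coe (hf i hi)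
  have : Nontrivial R := ⟨⟨f 1, 0, hf_ne_zero 1 le_rfl⟩⟩
  have hσ_one : σ 1 = 0 := hσ.map_one
  intro i
  rcases Nat.eq_zero_or_pos i with rfl | hi
  · exact ⟨0, by rw [hf0, hσ_one]; rfl, Or.inl rfl⟩
  obtain ⟨t, ht⟩ := hσ.1.exists_eq_coe (hf_ne_zero i hi)
  refine ⟨t, ht, or_iff_not_imp_left.2 fun ht0 => ?_⟩
  refine notMem_Hset_of_minimal hρ.1 hσ.1 (hf i hi) (by exact_mod_cast hi) ht ?_
    (hmin i hi)
  rw [hσ_one]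
  exact_mod_cast Nat.pos_of_ne_zero ht0

/-- for a good basis of well agreeing near weights, each value
`σ(f_i)` is either `0` or a gap of `H(σ) = {m : (0,m) ∈ H(ρ,σ)}`. -/
theorem stmt_14 {F R : Type*} [Field F] [CommRing R] [Algebra F R]
    (ρ σ : R → WithBot ℕ) (hρ : IsNearWeight F ρ) (hσ : IsNearWeight F σ)
    (hfin : {p : ℕ × ℕ | p ∉ Hset ρ σ}.Finite)
    (hU : {h : R | ρ h ≤ ρ 1} ∩ {h : R | σ h ≤ σ 1} = Set.range (algebraMap F R))
    (f : ℕ → R) (hf0 : f 0 = 1)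
    (hf : ∀ i : ℕ, 1 ≤ i → ρ (f i) = (i : WithBot ℕ))
    (hmin : ∀ i : ℕ, 1 ≤ i → ∀ h : R, ρ h = (i : WithBot ℕ) → σ (f i) ≤ σ h) :
    ∀ i : ℕ, ∃ t : ℕ, σ (f i) = (t : WithBot ℕ) ∧
      (t = 0 ∨ (0, t) ∉ Hset ρ σ) :=
  stmt_14_general ρ σ hρ hσ f hf0 hf hmin
end
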